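/- Suppose f(α) = α + g(α) where g : ℝ → ℝ is C² with ‖g‖_{C²} ≤ 1/2. Then f is a bijection of ℝ and its inverse satisfies f^{-1}(ξ) = ξ - g(ξ) + g(ξ)g'(ξ) + E(ξ), where |E(ξ)| ≤ C(‖g'‖_{L^∞}² ‖g‖_{L^∞} + ‖g‖_{L^∞}² ‖g''‖_{L^∞}) uniformly in ξ. -/

import Mathlib

/-!
`f = id + g` is strictly increasing (`f' ≥ 1/2`) and stays within `‖g‖_∞` of the identity, so it
is a bijection. Write `α = f⁻¹(ξ)`, so that `α - ξ = -g(α)` and hence `|α - ξ| ≤ ‖g‖_∞`. Then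
`α - (ξ - g ξ + g ξ g' ξ) = -(g α - g ξ - g' ξ (α - ξ)) + g' ξ (g α - g ξ)`:
the first term is a first-order Taylor remainder, of size `‖g''‖_∞ |α - ξ|²`, and the second
is at most `‖g'‖_∞ · ‖g'‖_∞ |α - ξ|` by the mean value theorem. The constant `C = 1` works.
-/

lemma abs_sub_le_of_abs_deriv_le {h : ℝ → ℝ} (hh : Differentiable ℝ h) {K : ℝ}
    (hK : ∀ x, |deriv h x| ≤ K) (a b : ℝ) : |h b - h a| ≤ K * |b - a| :=
  convex_univ.norm_image_sub_le_of_norm_deriv_le (fun x _ => hh x) (fun x _ => hK x)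
    (Set.mem_univ a) (Set.mem_univ b)

lemma abs_taylor_remainder_one_le {g : ℝ → ℝ} (hg : Differentiable ℝ g)
    (hg' : Differentiable ℝ (deriv g)) {M : ℝ} (hM : ∀ x, |deriv (deriv g) x| ≤ M) (x y : ℝ) :
    |g y - g x - deriv g x * (y - x)| ≤ M * |y - x| ^ 2 := by
  have hM0 : 0 ≤ M := (abs_nonneg _).trans (hM 0)
  have hderiv : ∀ t ∈ Set.uIcc x y, HasDerivWithinAt (fun s => g s - deriv g x * s)
      (deriv g t - deriv g x) (Set.uIcc x y) t := fun t _ => by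
    simpa using ((hg t).hasDerivAt.fun_sub (hasDerivAt_id' t |>.const_mul (deriv g x))).hasDerivWithinAt
  have hbound : ∀ t ∈ Set.uIcc x y, ‖deriv g t - deriv g x‖ ≤ M * |y - x| := fun t ht =>
    calc |deriv g t - deriv g x| ≤ M * |t - x| := abs_sub_le_of_abs_deriv_le hg' hM x t
      _ ≤ M * |y - x| := mul_le_mul_of_nonneg_left (Set.abs_sub_left_of_mem_uIcc ht) hM0
  have := convex_uIcc x y |>.norm_image_sub_le_of_norm_hasDerivWithin_le hderiv hbound
    Set.left_mem_uIcc Set.right_mem_uIcc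
  calc |g y - g x - deriv g x * (y - x)|
      = |(g y - deriv g x * y) - (g x - deriv g x * x)| := by ring_nf
    _ ≤ M * |y - x| * |y - x| := this
    _ = M * |y - x| ^ 2 := by ring

lemma bijective_id_add {g : ℝ → ℝ} (hg : Differentiable ℝ g) {M : ℝ} (hM : ∀ x, |g x| ≤ M)
    (hg' : ∀ x, -1 < deriv g x) : Function.Bijective (fun x => x + g x) := by
  refine ⟨(strictMono_of_deriv_pos fun x => ?_).injective, fun ξ => ?_⟩
  · rw [((hasDerivAt_id' x).fun_add (hg x).hasDerivAt).deriv]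
    linarith [hg' x]
  · have hlo := (abs_le.mp (hM (ξ - M))).2
    have hhi := (abs_le.mp (hM (ξ + M))).1
    obtain ⟨x, -, hx⟩ := intermediate_value_uIcc (a := ξ - M) (b := ξ + M)
      (continuous_id'.add hg.continuous).continuousOn
      (Set.Icc_subset_uIcc ⟨show ξ - M + g (ξ - M) ≤ ξ by linarith,
        show ξ ≤ ξ + M + g (ξ + M) by linarith⟩)
    exact ⟨x, hx⟩

lemma abs_inverse_expansion_error_le {g : ℝ → ℝ} (hg : Differentiable ℝ g)
    (hg' : Differentiable ℝ (deriv g)) {Mg Mg' Mg'' : ℝ} (hMg : ∀ x, |g x| ≤ Mg)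
    (hMg' : ∀ x, |deriv g x| ≤ Mg') (hMg'' : ∀ x, |deriv (deriv g) x| ≤ Mg'')
    {α ξ : ℝ} (hαξ : α + g α = ξ) :
    |α - (ξ - g ξ + g ξ * deriv g ξ)| ≤ Mg' ^ 2 * Mg + Mg ^ 2 * Mg'' := by
  have hMg'0 : 0 ≤ Mg' := (abs_nonneg _).trans (hMg' 0)
  have hdist : |α - ξ| ≤ Mg := by
    rw [show α - ξ = -g α by linarith, abs_neg]
    exact hMg α
  have htaylor : |g α - g ξ - deriv g ξ * (α - ξ)| ≤ Mg'' * Mg ^ 2 :=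
    (abs_taylor_remainder_one_le hg hg' hMg'' ξ α).trans <| mul_le_mul_of_nonneg_left
      (pow_le_pow_left₀ (abs_nonneg _) hdist 2) ((abs_nonneg _).trans (hMg'' 0))
  have hlip : |deriv g ξ * (g α - g ξ)| ≤ Mg' * (Mg' * Mg) := by
    rw [abs_mul]
    exact mul_le_mul (hMg' ξ) ((abs_sub_le_of_abs_deriv_le hg hMg' ξ α).trans
      (mul_le_mul_of_nonneg_left hdist hMg'0)) (abs_nonneg _) hMg'0
  calc |α - (ξ - g ξ + g ξ * deriv g ξ)|
      = |-(g α - g ξ - deriv g ξ * (α - ξ)) + deriv g ξ * (g α - g ξ)| := by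
        congr 1; linear_combination (1 - deriv g ξ) * hαξ
    _ ≤ |g α - g ξ - deriv g ξ * (α - ξ)| + |deriv g ξ * (g α - g ξ)| := by
        simpa only [abs_neg] using abs_add_le (-(g α - g ξ - deriv g ξ * (α - ξ))) _
    _ ≤ Mg' ^ 2 * Mg + Mg ^ 2 * Mg'' := by linarith

/-- If `f(α) = α + g(α)` with `‖g‖_{C²} ≤ 1/2`, then `f` is a bijection of `ℝ` and
`f⁻¹(ξ) = ξ - g(ξ) + g(ξ) g'(ξ) + E(ξ)` with
`|E| ≤ C (‖g'‖_∞² ‖g‖_∞ + ‖g‖_∞² ‖g''‖_∞)` uniformly, for an absolute constant `C`. -/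
theorem inverse_expansion :
    ∃ C > (0 : ℝ), ∀ g : ℝ → ℝ, ContDiff ℝ 2 g →
      ∀ Mg Mg' Mg'' : ℝ,
        (∀ x, |g x| ≤ Mg) → (∀ x, |deriv g x| ≤ Mg') →
        (∀ x, |deriv (deriv g) x| ≤ Mg'') →
        Mg ≤ 1 / 2 → Mg' ≤ 1 / 2 → Mg'' ≤ 1 / 2 →
        Function.Bijective (fun α : ℝ => α + g α) ∧
          ∀ ξ : ℝ,
            |Function.invFun (fun α : ℝ => α + g α) ξ
                - (ξ - g ξ + g ξ * deriv g ξ)|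
              ≤ C * (Mg' ^ 2 * Mg + Mg ^ 2 * Mg'') := by
  refine ⟨1, one_pos, fun g hg Mg Mg' Mg'' hMg hMg' hMg'' _ hMg'_half _ => ?_⟩
  have hgd : Differentiable ℝ g := hg.differentiable two_ne_zero
  have hbij : Function.Bijective (fun α : ℝ => α + g α) :=
    bijective_id_add hgd hMg fun x => by linarith [(abs_le.mp (hMg' x)).1]
  refine ⟨hbij, fun ξ => ?_⟩
  rw [one_mul]
  exact abs_inverse_expansion_error_le hgd hg.differentiable_deriv_two hMg hMg' hMg''
    (Function.rightInverse_invFun hbij.2 ξ)
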